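/- Let 𝕋 = ℝ/2πℤ with Lebesgue measure, and let g : 𝕋 → ℝ be continuous with g ≥ 0 and ∫_𝕋 g = 1. Extend G complex-linearly by (Gℓ)(x) := g(x)·(ℓ(x) − ∫_𝕋 g(y)ℓ(y) dy) for ℓ : 𝕋 → ℂ. Let k₀, k₁, k₂ be pairwise distinct nonzero integers and λ₀, λ₁, λ₂ ∈ ℂ. If λ₀·G(e^{−ik₀x}) + λ₁·G(e^{−ik₁x}) + λ₂·G(e^{−ik₂x}) = 0 for every x ∈ 𝕋, then λ₀ = λ₁ = λ₂ = 0; that is, the three functions G(e^{−ik₀x}), G(e^{−ik₁x}), G(e^{−ik₂x}) are linearly independent over ℂ. -/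

import Mathlib

/-!
On the open set `{g ≠ 0}`, which is nonempty because `∫ g = 1`, the relation says that the
trigonometric polynomial `∑ λⱼ e^{-ikⱼx}` equals the constant `∑ λⱼ ∫ g e^{-ikⱼy} dy`. Lifted to
`ℝ`, this difference is real-analytic and vanishes on an open set, hence everywhere. The
characters `e^{inx}`, `n ∈ ℤ`, are linearly independent (they are orthonormal in `L²`), and the
frequencies `0, -k₀, -k₁, -k₂` are distinct, so all coefficients vanish.
-/

open MeasureTheory

instance : Fact ((0 : ℝ) < 2 * Real.pi) := ⟨by positivity⟩

/-- The complex-linear extension of the control operator: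
`(G ℓ)(x) = g(x) (ℓ(x) − ∫ g(y) ℓ(y) dy)` for `ℓ : 𝕋 → ℂ`. -/
noncomputable def GopC (g : AddCircle (2 * Real.pi) → ℝ)
    (ℓ : AddCircle (2 * Real.pi) → ℂ) : AddCircle (2 * Real.pi) → ℂ :=
  fun x => (g x : ℂ) * (ℓ x - ∫ y : AddCircle (2 * Real.pi), (g y : ℂ) * ℓ y)

open Filter Topology

namespace AddCircle

variable {T : ℝ}

theorem analyticAt_fourier_coe (n : ℤ) (t : ℝ) :
    AnalyticAt ℝ (fun s : ℝ => fourier n (s : AddCircle T)) t := by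
  simp only [fourier_coe_apply, mul_div_right_comm]
  exact analyticAt_cexp.restrictScalars.comp
    (analyticAt_const.mul (Complex.ofRealCLM.analyticAt t))

variable [Fact (0 < T)]

theorem linearIndependent_fourier :
    LinearIndependent ℂ (fun n : ℤ => ⇑(fourier n : C(AddCircle T, ℂ))) :=
  (LinearIndependent.of_comp (ContinuousMap.toLp (E := ℂ) 2 (haarAddCircle (T := T)) ℂ).toLinearMap
    orthonormal_fourier.linearIndependent).map' (ContinuousMap.coeFnLinearMap ℂ)
    (LinearMap.ker_eq_bot.mpr DFunLike.coe_injective)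

theorem eq_zero_of_sum_fourier_eventually_eq_zero {ι : Type*} [Fintype ι] {κ : ι → ℤ}
    (hκ : Function.Injective κ) {c : ι → ℂ} {x₀ : AddCircle T}
    (h : ∀ᶠ x in 𝓝 x₀, ∑ i, c i * fourier (κ i) x = 0) : c = 0 := by
  obtain ⟨t₀, rfl⟩ := QuotientAddGroup.mk_surjective x₀
  have hlift : (fun t : ℝ => ∑ i, c i * fourier (κ i) (t : AddCircle T)) = 0 :=
    AnalyticOnNhd.eq_of_eventuallyEq
      (fun t _ => Finset.analyticAt_fun_sum _ fun i _ =>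
        analyticAt_const.mul (analyticAt_fourier_coe _ t))
      (fun t _ => analyticAt_const) ((AddCircle.continuous_mk' T).continuousAt.eventually h)
  have hsum : ∑ i, c i • ⇑(fourier (κ i) : C(AddCircle T, ℂ)) = 0 := by
    funext x
    obtain ⟨t, rfl⟩ := QuotientAddGroup.mk_surjective x
    simpa using congrFun hlift t
  exact funext (Fintype.linearIndependent_iff.mp (linearIndependent_fourier.comp κ hκ) c hsum)

end AddCircle

theorem Gop_fourier_linearIndependent_general (g : AddCircle (2 * Real.pi) → ℝ)
    (hg_cont : Continuous g)
    (hg_int : ∫ x : AddCircle (2 * Real.pi), g x = 1)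
    (k₀ k₁ k₂ : ℤ) (hk₀ : k₀ ≠ 0) (hk₁ : k₁ ≠ 0) (hk₂ : k₂ ≠ 0)
    (h01 : k₀ ≠ k₁) (h02 : k₀ ≠ k₂) (h12 : k₁ ≠ k₂)
    (lam₀ lam₁ lam₂ : ℂ)
    (hzero : ∀ x : AddCircle (2 * Real.pi),
      lam₀ * GopC g (fun y => fourier (-k₀) y) x +
      lam₁ * GopC g (fun y => fourier (-k₁) y) x +
      lam₂ * GopC g (fun y => fourier (-k₂) y) x = 0) :
    lam₀ = 0 ∧ lam₁ = 0 ∧ lam₂ = 0 := by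
  obtain ⟨x₀, hx₀⟩ : ∃ x₀, g x₀ ≠ 0 := by
    by_contra! hg
    simp [hg] at hg_int
  have hκ : Function.Injective ![0, -k₀, -k₁, -k₂] := by
    intro i j hij
    fin_cases i <;> fin_cases j <;> simp_all [eq_comm]
  set mean : ℤ → ℂ := fun k => ∫ y : AddCircle (2 * Real.pi), (g y : ℂ) * fourier (-k) y
  have hc := AddCircle.eq_zero_of_sum_fourier_eventually_eq_zero hκ (x₀ := x₀)
    (c := ![-(lam₀ * mean k₀ + lam₁ * mean k₁ + lam₂ * mean k₂), lam₀, lam₁, lam₂]) <| by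
    filter_upwards [hg_cont.continuousAt.eventually_ne hx₀] with x hx
    simp only [Fin.sum_univ_four, Matrix.cons_val, fourier_zero]
    apply mul_left_cancel₀ (Complex.ofReal_ne_zero.mpr hx)
    simp only [GopC] at hzero
    linear_combination hzero x
  exact ⟨congrFun hc 1, congrFun hc 2, congrFun hc 3⟩

/-- For continuous `g ≥ 0` with `∫ g = 1` and pairwise distinct nonzero
integers `k₀, k₁, k₂`, the functions `G(e^{-ik₀x}), G(e^{-ik₁x}), G(e^{-ik₂x})`
are linearly independent over `ℂ`. -/
theorem Gop_fourier_linearIndependent (g : AddCircle (2 * Real.pi) → ℝ)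
    (hg_cont : Continuous g) (hg_nonneg : ∀ x, 0 ≤ g x)
    (hg_int : ∫ x : AddCircle (2 * Real.pi), g x = 1)
    (k₀ k₁ k₂ : ℤ) (hk₀ : k₀ ≠ 0) (hk₁ : k₁ ≠ 0) (hk₂ : k₂ ≠ 0)
    (h01 : k₀ ≠ k₁) (h02 : k₀ ≠ k₂) (h12 : k₁ ≠ k₂)
    (lam₀ lam₁ lam₂ : ℂ)
    (hzero : ∀ x : AddCircle (2 * Real.pi),
      lam₀ * GopC g (fun y => fourier (-k₀) y) x +
      lam₁ * GopC g (fun y => fourier (-k₁) y) x +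
      lam₂ * GopC g (fun y => fourier (-k₂) y) x = 0) :
    lam₀ = 0 ∧ lam₁ = 0 ∧ lam₂ = 0 :=
  Gop_fourier_linearIndependent_general g hg_cont hg_int k₀ k₁ k₂ hk₀ hk₁ hk₂ h01 h02 h12 lam₀ lam₁
    lam₂ hzero
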